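/- arXiv:2312.12358 — 4 statements merged into one kernel-verified Lean document; each statement's English description precedes it below -/
import Mathlib

section
/- Let b ≥ 1, K ≥ 1, L ≥ 1 be integers and let g_1, …, g_L ∈ ℂ^K. Suppose ψ* = (ψ*_1, …, ψ*_L), with each ψ*_ℓ ∈ F_b^K, maximizes the passive beamforming gain F(ψ) = Σ_{ℓ=1}^L |ψ_ℓᵀ g_ℓ|² over all configurations ψ with ψ_ℓ ∈ F_b^K for every ℓ. Then for every ℓ ∈ {1, …, L} and every partition {S₁, S₂} of {1, …, K} (S₁ ∩ S₂ = ∅, S₁ ∪ S₂ = {1, …, K}) such that the two partial sums I₁ = Σ_{k ∈ S₁} ψ*_{ℓ,k} g_{ℓ,k} and I₂ = Σ_{k ∈ S₂} ψ*_{ℓ,k} g_{ℓ,k} are both nonzero, one has A(I₁, I₂) ≤ π/2^b. -/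
open scoped Real

/-- Internal angle between two complex numbers:
`A(x, y) = π − | |arg x − arg y| − π |`. -/
noncomputable def intAngle (x y : ℂ) : ℝ :=
  π - |(|Complex.arg x - Complex.arg y|) - π|

/-- The candidate discrete RIS reflection coefficients: the `2^b`-th roots of unity. -/
def Fb (b : ℕ) : Set ℂ :=
  {z | ∃ s : ℕ, s < 2 ^ b ∧ z = Complex.exp (2 * π * Complex.I * s / 2 ^ b)}

/-- Passive beamforming gain `F(ψ) = Σ_ℓ |ψ_ℓᵀ g_ℓ|²`. -/
noncomputable def gain {K L : ℕ} (g ψ : Fin L → Fin K → ℂ) : ℝ :=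
  ∑ ℓ, ‖∑ k, ψ ℓ k * g ℓ k‖ ^ 2

/-!
Suppose `A(I₁, I₂) > π / 2^b` and let `w = I₁ * conj I₂`, so that `|arg w| ≥ A(I₁, I₂)`. Multiplying
the coefficients `ψ*_{ℓ,k}`, `k ∈ S₁`, by the root of unity `c = exp (∓ 2πi / 2^b)` (sign opposite
to that of `arg w`) keeps the configuration admissible and turns `I₁ + I₂` into `c I₁ + I₂`. Since
`|c I₁ + I₂|² - |I₁ + I₂|² = 2 (Re (c w) - Re w)` and rotating `w` by less than twice its argument
towards the positive real axis increases its real part, the gain strictly increases, contradicting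
the maximality of `ψ*`.
-/

open Complex ComplexConjugate

lemma mem_Fb_iff {b : ℕ} {z : ℂ} : z ∈ Fb b ↔ z ^ 2 ^ b = 1 := by
  have h2b : (2 : ℂ) ^ b ≠ 0 := pow_ne_zero _ two_ne_zero
  constructor
  · rintro ⟨s, -, rfl⟩
    rw [← exp_nat_mul, ← exp_nat_mul_two_pi_mul_I s]
    congr 1
    push_cast
    field_simp
  · intro hz
    have : NeZero (2 ^ b) := ⟨pow_ne_zero _ two_ne_zero⟩
    obtain ⟨s, hs, rfl⟩ :=
      (isPrimitiveRoot_exp (2 ^ b) (pow_ne_zero _ two_ne_zero)).eq_pow_of_pow_eq_one hz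
    refine ⟨s, hs, ?_⟩
    rw [← exp_nat_mul]
    push_cast
    ring_nf

lemma one_mem_Fb (b : ℕ) : (1 : ℂ) ∈ Fb b :=
  mem_Fb_iff.mpr (one_pow _)

lemma mul_mem_Fb {b : ℕ} {z w : ℂ} (hz : z ∈ Fb b) (hw : w ∈ Fb b) : z * w ∈ Fb b := by
  rw [mem_Fb_iff] at *
  rw [mul_pow, hz, hw, one_mul]

lemma norm_eq_one_of_mem_Fb {b : ℕ} {z : ℂ} (hz : z ∈ Fb b) : ‖z‖ = 1 :=
  norm_eq_one_of_pow_eq_one (mem_Fb_iff.mp hz) (pow_ne_zero _ two_ne_zero)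

lemma exp_int_mul_mem_Fb (b : ℕ) (k : ℤ) : exp (↑(k * (2 * (π / 2 ^ b))) * I) ∈ Fb b := by
  rw [mem_Fb_iff, ← exp_nat_mul, ← exp_int_mul_two_pi_mul_I k]
  congr 1
  push_cast
  field_simp

/- For `|θ| ≤ 2π` the left side is the distance from `θ` to `2πℤ`; beyond that it is negative. -/
lemma pi_sub_abs_abs_sub_pi_le_abs_toReal (θ : ℝ) :
    π - |(|θ|) - π| ≤ |(θ : Real.Angle).toReal| := by
  obtain ⟨k, hk⟩ :=
    Real.Angle.angle_eq_iff_two_pi_dvd_sub.mp (Real.Angle.coe_toReal (θ : Real.Angle)).symm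
  rcases eq_or_ne k 0 with rfl | hk0
  · rw [Int.cast_zero, mul_zero, sub_eq_zero] at hk
    rw [← hk]
    linarith [neg_abs_le (|θ| - π)]
  · have hk1 : (1 : ℝ) ≤ |(k : ℝ)| := by exact_mod_cast Int.one_le_abs hk0
    have : 2 * π ≤ |θ| + |(θ : Real.Angle).toReal| := calc
      2 * π ≤ 2 * π * |(k : ℝ)| := by nlinarith [Real.pi_pos]
      _ = |θ - (θ : Real.Angle).toReal| := by rw [hk, abs_mul, abs_of_pos Real.two_pi_pos]
      _ ≤ |θ| + |(θ : Real.Angle).toReal| := abs_sub _ _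
    linarith [le_abs_self (|θ| - π)]

lemma intAngle_le_abs_arg_mul_conj {x y : ℂ} (hx : x ≠ 0) (hy : y ≠ 0) :
    intAngle x y ≤ |arg (x * conj y)| := by
  have harg : arg (x * conj y) = ((arg x - arg y : ℝ) : Real.Angle).toReal := by
    rw [← arg_coe_angle_toReal_eq_arg, arg_mul_coe_angle hx ((map_ne_zero _).mpr hy),
      arg_conj_coe_angle, Real.Angle.coe_sub, sub_eq_add_neg]
  rw [harg]
  exact pi_sub_abs_abs_sub_pi_le_abs_toReal _

lemma Real.cos_lt_cos_sub_two_mul {φ α : ℝ} (hα : 0 < α) (hαφ : α < φ) (hφ : φ ≤ π) :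
    Real.cos φ < Real.cos (φ - 2 * α) := by
  rw [← Real.cos_abs (φ - 2 * α)]
  exact Real.cos_lt_cos_of_nonneg_of_le_pi (abs_nonneg _) hφ
    (abs_lt.mpr ⟨by linarith, by linarith⟩)

lemma re_exp_mul_I_mul (t : ℝ) (w : ℂ) : (exp (t * I) * w).re = ‖w‖ * Real.cos (arg w + t) := by
  conv_lhs => rw [← norm_mul_exp_arg_mul_I w, mul_left_comm, ← exp_add]
  rw [← add_mul, ← ofReal_add, re_ofReal_mul, exp_ofReal_mul_I_re, add_comm t]

lemma re_lt_re_exp_mul_I_mul {α : ℝ} {w : ℂ} (hα : 0 < α) (h : α < |arg w|) :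
    w.re < (exp (↑(2 * α) * I) * w).re ∨ w.re < (exp (↑(-(2 * α)) * I) * w).re := by
  have hw : 0 < ‖w‖ := norm_pos_iff.mpr (by rintro rfl; simp at h; linarith)
  have hre := re_exp_mul_I_mul 0 w
  simp only [ofReal_zero, zero_mul, exp_zero, one_mul, add_zero] at hre
  rw [re_exp_mul_I_mul, re_exp_mul_I_mul, hre]
  rcases le_or_gt 0 (arg w) with h0 | h0
  · rw [abs_of_nonneg h0] at h
    exact Or.inr (mul_lt_mul_of_pos_left (Real.cos_lt_cos_sub_two_mul hα h (arg_le_pi w)) hw)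
  · rw [abs_of_neg h0] at h
    have := Real.cos_lt_cos_sub_two_mul hα h (by linarith [neg_pi_lt_arg w])
    rw [Real.cos_neg, ← Real.cos_neg (-arg w - 2 * α), neg_sub', neg_neg, sub_neg_eq_add] at this
    exact Or.inl (mul_lt_mul_of_pos_left this hw)

lemma norm_add_lt_norm_mul_add {c x y : ℂ} (hc : ‖c‖ = 1)
    (h : (x * conj y).re < (c * (x * conj y)).re) : ‖x + y‖ < ‖c * x + y‖ := by
  rw [← sq_lt_sq₀ (norm_nonneg _) (norm_nonneg _), Complex.sq_norm, Complex.sq_norm,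
    normSq_add, normSq_add, normSq_mul, normSq_eq_norm_sq c, hc, mul_assoc]
  linarith

lemma Finset.sum_ite_mem_mul {ι R : Type*} [Fintype ι] [DecidableEq ι] [CommSemiring R]
    (S : Finset ι) (c : R) (f : ι → R) :
    ∑ k, (if k ∈ S then c else 1) * f k = c * ∑ k ∈ S, f k + ∑ k ∈ Sᶜ, f k := by
  rw [← Finset.sum_add_sum_compl S, Finset.mul_sum]
  congr 1 <;> refine Finset.sum_congr rfl fun k hk => ?_
  · rw [if_pos hk]
  · rw [if_neg (Finset.mem_compl.mp hk), one_mul]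

lemma gain_lt_gain_update {K L : ℕ} {g ψ : Fin L → Fin K → ℂ} {ℓ : Fin L} {v : Fin K → ℂ}
    (h : ‖∑ k, ψ ℓ k * g ℓ k‖ < ‖∑ k, v k * g ℓ k‖) :
    gain g ψ < gain g (Function.update ψ ℓ v) := by
  refine Finset.sum_lt_sum (fun i _ => ?_) ⟨ℓ, Finset.mem_univ _, ?_⟩
  · rcases eq_or_ne i ℓ with rfl | hi
    · simp only [Function.update_self]
      exact pow_le_pow_left₀ (norm_nonneg _) h.le 2
    · rw [Function.update_of_ne hi]
  · simp only [Function.update_self]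
    exact pow_lt_pow_left₀ h (norm_nonneg _) two_ne_zero

theorem stmt0_general {b K L : ℕ}
    (g : Fin L → Fin K → ℂ) (ψstar : Fin L → Fin K → ℂ)
    (hmem : ∀ ℓ k, ψstar ℓ k ∈ Fb b)
    (hmax : ∀ ψ : Fin L → Fin K → ℂ, (∀ ℓ k, ψ ℓ k ∈ Fb b) →
      gain g ψ ≤ gain g ψstar) :
    ∀ (ℓ : Fin L) (S₁ S₂ : Finset (Fin K)),
      Disjoint S₁ S₂ → S₁ ∪ S₂ = Finset.univ →
      (∑ k ∈ S₁, ψstar ℓ k * g ℓ k) ≠ 0 →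
      (∑ k ∈ S₂, ψstar ℓ k * g ℓ k) ≠ 0 →
      intAngle (∑ k ∈ S₁, ψstar ℓ k * g ℓ k) (∑ k ∈ S₂, ψstar ℓ k * g ℓ k)
        ≤ π / 2 ^ b := by
  intro ℓ S₁ S₂ hdisj hunion hI₁ hI₂
  obtain rfl : S₂ = S₁ᶜ := (IsCompl.compl_eq ⟨hdisj, codisjoint_iff.mpr hunion⟩).symm
  by_contra! hangle
  set I₁ := ∑ k ∈ S₁, ψstar ℓ k * g ℓ k
  set I₂ := ∑ k ∈ S₁ᶜ, ψstar ℓ k * g ℓ k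
  have harg : π / 2 ^ b < |arg (I₁ * conj I₂)| :=
    hangle.trans_le (intAngle_le_abs_arg_mul_conj hI₁ hI₂)
  obtain ⟨c, hc, hre⟩ : ∃ c ∈ Fb b, (I₁ * conj I₂).re < (c * (I₁ * conj I₂)).re := by
    rcases re_lt_re_exp_mul_I_mul (by positivity) harg with h | h
    · exact ⟨_, by simpa using exp_int_mul_mem_Fb b 1, h⟩
    · exact ⟨_, by simpa using exp_int_mul_mem_Fb b (-1), h⟩
  set v : Fin K → ℂ := fun k => (if k ∈ S₁ then c else 1) * ψstar ℓ k
  have hv : ∀ k, v k ∈ Fb b := fun k =>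
    mul_mem_Fb (by split_ifs; exacts [hc, one_mem_Fb b]) (hmem ℓ k)
  have hrow : ‖∑ k, ψstar ℓ k * g ℓ k‖ < ‖∑ k, v k * g ℓ k‖ := by
    simp only [v, mul_assoc]
    rw [Finset.sum_ite_mem_mul, ← Finset.sum_add_sum_compl S₁]
    exact norm_add_lt_norm_mul_add (norm_eq_one_of_mem_Fb hc) hre
  refine (hmax _ fun ℓ' k => ?_).not_gt (gain_lt_gain_update hrow)
  rcases eq_or_ne ℓ' ℓ with rfl | hℓ'
  · simpa using hv k
  · simpa [Function.update_of_ne hℓ'] using hmem ℓ' k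

theorem stmt0 {b K L : ℕ} (hb : 1 ≤ b) (hK : 1 ≤ K) (hL : 1 ≤ L)
    (g : Fin L → Fin K → ℂ) (ψstar : Fin L → Fin K → ℂ)
    (hmem : ∀ ℓ k, ψstar ℓ k ∈ Fb b)
    (hmax : ∀ ψ : Fin L → Fin K → ℂ, (∀ ℓ k, ψ ℓ k ∈ Fb b) →
      gain g ψ ≤ gain g ψstar) :
    ∀ (ℓ : Fin L) (S₁ S₂ : Finset (Fin K)),
      Disjoint S₁ S₂ → S₁ ∪ S₂ = Finset.univ →
      (∑ k ∈ S₁, ψstar ℓ k * g ℓ k) ≠ 0 →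
      (∑ k ∈ S₂, ψstar ℓ k * g ℓ k) ≠ 0 →
      intAngle (∑ k ∈ S₁, ψstar ℓ k * g ℓ k) (∑ k ∈ S₂, ψstar ℓ k * g ℓ k)
        ≤ π / 2 ^ b :=
  stmt0_general g ψstar hmem hmax
end

section
/- Let b ≥ 1, K ≥ 1 be integers and let g ∈ ℂ^K have all entries g_k nonzero. Let ψ ∈ F_b^K satisfy ψᵀg = Σ_{k=1}^K ψ_k g_k ≠ 0, and suppose that for every partition {S₁, S₂} of {1, …, K} for which the partial sums Σ_{k ∈ S₁} ψ_k g_k and Σ_{k ∈ S₂} ψ_k g_k are both nonzero, one has A(Σ_{k ∈ S₁} ψ_k g_k, Σ_{k ∈ S₂} ψ_k g_k) ≤ π/2^b. Then, setting ω = arg(ψᵀg), for every k ∈ {1, …, K} it holds that ψ_k = exp(i·(2π/2^b)·round(−(2^b/(2π))·arg(g_k) + (2^b/(2π))·ω)), i.e., ψ_k = ψ̂_{g_k}(ω). -/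
open scoped Real

/-- The ω-beamformer phase
`ψ̂_g(ω) = exp(i·(2π/2^b)·round(−(2^b/(2π))·arg g + (2^b/(2π))·ω))`. -/
noncomputable def psiHat (b : ℕ) (g : ℂ) (ω : ℝ) : ℂ :=
  Complex.exp (Complex.I * ((2 * π / 2 ^ b : ℝ) : ℂ) *
    ((round ((-(2 ^ b / (2 * π)) * Complex.arg g + (2 ^ b / (2 * π)) * ω : ℝ)) : ℤ) : ℂ))

open Complex

/-!
Fix `k` and split the sum `T = ∑ ψⱼ gⱼ` as `u + R` with `u = ψₖ gₖ`. The angle hypothesis for the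
partition `{k}, {j ≠ k}` says `|arg (R / u)| ≤ π / 2^b ≤ π / 2`, and adding `1` to a number in the
closed right half-plane strictly shrinks its argument, so `d = arg (T / u)` satisfies
`|d| < π / 2^b`. Hence `arg T − arg gₖ ≡ arg ψₖ + d (mod 2π)`, and since `arg ψₖ` is a multiple of
`2π / 2^b`, the rounding in `ψ̂` recovers exactly `ψₖ`.
-/

lemma Real.abs_arcsin (x : ℝ) : |Real.arcsin x| = Real.arcsin |x| := by
  rcases abs_cases x with ⟨hx, h0⟩ | ⟨hx, h0⟩
  · rw [hx, abs_of_nonneg (Real.arcsin_nonneg.mpr h0)]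
  · rw [hx, Real.arcsin_neg, abs_of_neg (Real.arcsin_lt_zero.mpr h0)]

lemma Real.Angle.abs_toReal_coe_of_abs_lt {t : ℝ} (ht : |t| < 2 * π) :
    |(t : Real.Angle).toReal| = π - |(|t|) - π| := by
  wlog h0 : 0 ≤ t generalizing t
  · rw [← Real.Angle.abs_toReal_neg, ← Real.Angle.coe_neg, this (by rwa [abs_neg]) (by linarith),
      abs_neg]
  rw [abs_of_nonneg h0] at ht ⊢
  rcases le_or_gt t π with hπ | hπ
  · rw [Real.Angle.toReal_coe_eq_self_iff.mpr ⟨by linarith [Real.pi_pos], hπ⟩,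
      abs_of_nonneg h0, abs_of_nonpos (by linarith)]
    ring
  · rw [Real.Angle.toReal_coe_eq_self_sub_two_pi_iff.mpr ⟨hπ, by linarith [Real.pi_pos]⟩,
      abs_of_neg (by linarith), abs_of_pos (by linarith)]
    ring

lemma intAngle_eq_abs_arg_div {x y : ℂ} (hx : x ≠ 0) (hy : y ≠ 0) :
    intAngle x y = |arg (x / y)| := by
  rw [← arg_coe_angle_toReal_eq_arg, arg_div_coe_angle hx hy, ← Real.Angle.coe_sub,
    Real.Angle.abs_toReal_coe_of_abs_lt, intAngle]
  rw [abs_sub_lt_iff]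
  constructor <;> linarith [neg_pi_lt_arg x, arg_le_pi x, neg_pi_lt_arg y, arg_le_pi y]

lemma Complex.abs_arg_of_re_nonneg {z : ℂ} (hz : 0 ≤ z.re) :
    |arg z| = Real.arcsin (|z.im| / ‖z‖) := by
  rw [arg_of_re_nonneg hz, Real.abs_arcsin, abs_div, abs_norm]

lemma Complex.abs_arg_one_add_lt {w : ℂ} (hre : 0 ≤ w.re) (him : w.im ≠ 0) :
    |arg (1 + w)| < |arg w| := by
  have hw : 0 < ‖w‖ := norm_pos_iff.mpr fun h => him (by simp [h])
  have hnorm : ‖w‖ < ‖1 + w‖ := by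
    refine lt_of_pow_lt_pow_left₀ 2 (norm_nonneg _) ?_
    rw [Complex.sq_norm, Complex.sq_norm, normSq_apply, normSq_apply]
    simp only [add_re, add_im, one_re, one_im]
    nlinarith
  rw [abs_arg_of_re_nonneg hre, abs_arg_of_re_nonneg (by simp only [add_re, one_re]; linarith)]
  simp only [add_im, one_im, zero_add]
  refine Real.arcsin_lt_arcsin (by linarith [div_nonneg (abs_nonneg w.im) (norm_nonneg (1 + w))])
    (div_lt_div_of_pos_left (abs_pos.mpr him) hw hnorm)
    ((div_le_one hw).mpr (abs_im_le_norm w))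

lemma Complex.abs_arg_one_add_lt_of_abs_arg_le {w : ℂ} {θ : ℝ} (hθ0 : 0 < θ) (hθ : θ ≤ π / 2)
    (hw : |arg w| ≤ θ) : |arg (1 + w)| < θ := by
  have hre : 0 ≤ w.re := abs_arg_le_pi_div_two_iff.mp (hw.trans hθ)
  by_cases him : w.im = 0
  · rwa [arg_eq_zero_iff.mpr ⟨by simp only [add_re, one_re]; linarith,
      by simp only [add_im, one_im, him, add_zero]⟩, abs_zero]
  · exact (abs_arg_one_add_lt hre him).trans_le hw

lemma abs_arg_add_div_lt {u v : ℂ} {θ : ℝ} (hθ0 : 0 < θ) (hθ : θ ≤ π / 2) (hu : u ≠ 0)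
    (huv : v ≠ 0 → intAngle u v ≤ θ) : |arg ((u + v) / u)| < θ := by
  rcases eq_or_ne v 0 with rfl | hv
  · simpa [hu] using hθ0
  rw [add_div, div_self hu]
  refine abs_arg_one_add_lt_of_abs_arg_le hθ0 hθ ?_
  rw [← inv_div, abs_arg_inv, ← intAngle_eq_abs_arg_div hu hv]
  exact huv hv

lemma coe_arg_exp_mul_I (x : ℝ) : (arg (exp (x * I)) : Real.Angle) = x := by
  rw [arg_coe_angle_eq_iff_eq_toReal, arg_exp_mul_I, Real.Angle.toReal_coe]

lemma psiHat_eq_of_coe_angle {b : ℕ} {s : ℤ} {g : ℂ} {ω d : ℝ} (hd : |d| < π / 2 ^ b)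
    (h : ((ω - arg g : ℝ) : Real.Angle) = (2 * π * s / 2 ^ b + d : ℝ)) :
    psiHat b g ω = exp (2 * π * I * s / 2 ^ b) := by
  obtain ⟨n, hn⟩ := Real.Angle.angle_eq_iff_two_pi_dvd_sub.mp h
  have hround_arg : -(2 ^ b / (2 * π)) * arg g + 2 ^ b / (2 * π) * ω
      = ((s + 2 ^ b * n : ℤ) : ℝ) + 2 ^ b / (2 * π) * d := by
    rw [show ω = arg g + (2 * π * s / 2 ^ b + d) + 2 * π * n by linarith]
    push_cast
    field_simp
    ring
  have hsmall : |2 ^ b / (2 * π) * d| < 1 / 2 := by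
    rw [abs_mul, abs_of_pos (by positivity)]
    calc 2 ^ b / (2 * π) * |d| < 2 ^ b / (2 * π) * (π / 2 ^ b) := by gcongr
      _ = 1 / 2 := by field_simp
  have hround : round (-(2 ^ b / (2 * π)) * arg g + 2 ^ b / (2 * π) * ω : ℝ)
      = s + 2 ^ b * n := by
    rw [hround_arg, round_intCast_add, round_eq_zero_iff.mpr, add_zero]
    constructor <;> linarith [abs_lt.mp hsmall]
  rw [psiHat, hround, exp_eq_exp_iff_exists_int]
  exact ⟨n, by push_cast; field_simp⟩

theorem stmt1_general {b K : ℕ} (hb : 1 ≤ b)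
    (g : Fin K → ℂ) (hg : ∀ k, g k ≠ 0)
    (ψ : Fin K → ℂ) (hmem : ∀ k, ψ k ∈ Fb b)
    (hne : (∑ k, ψ k * g k) ≠ 0)
    (hang : ∀ S₁ S₂ : Finset (Fin K),
      Disjoint S₁ S₂ → S₁ ∪ S₂ = Finset.univ →
      (∑ k ∈ S₁, ψ k * g k) ≠ 0 → (∑ k ∈ S₂, ψ k * g k) ≠ 0 →
      intAngle (∑ k ∈ S₁, ψ k * g k) (∑ k ∈ S₂, ψ k * g k) ≤ π / 2 ^ b) :
    ∀ k, ψ k = psiHat b (g k) (Complex.arg (∑ k, ψ k * g k)) := by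
  intro k
  obtain ⟨s, -, hψ⟩ := hmem k
  have hψ0 : ψ k ≠ 0 := hψ ▸ exp_ne_zero _
  have hu : ψ k * g k ≠ 0 := mul_ne_zero hψ0 (hg k)
  have hsplit : ∑ j, ψ j * g j = ψ k * g k + ∑ j ∈ Finset.univ.erase k, ψ j * g j :=
    (Finset.add_sum_erase _ _ (Finset.mem_univ k)).symm
  have hθ : π / 2 ^ b ≤ π / 2 := by
    gcongr
    exact le_self_pow₀ one_le_two (by omega)
  have hd : |arg ((∑ j, ψ j * g j) / (ψ k * g k))| < π / 2 ^ b := by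
    rw [hsplit]
    refine abs_arg_add_div_lt (by positivity) hθ hu fun hR => ?_
    simpa using hang {k} _ (by simp) (by simp) (by simpa using hu) hR
  have hangle : ((arg (∑ j, ψ j * g j) - arg (g k) : ℝ) : Real.Angle)
      = (2 * π * (s : ℤ) / 2 ^ b + arg ((∑ j, ψ j * g j) / (ψ k * g k)) : ℝ) := by
    have hψarg : (arg (ψ k) : Real.Angle) = (2 * π * (s : ℤ) / 2 ^ b : ℝ) := by
      rw [hψ, show 2 * π * I * s / 2 ^ b = ((2 * π * (s : ℤ) / 2 ^ b : ℝ) : ℂ) * I by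
        push_cast; ring, coe_arg_exp_mul_I]
    rw [Real.Angle.coe_sub, Real.Angle.coe_add, arg_div_coe_angle hne hu,
      arg_mul_coe_angle hψ0 (hg k), hψarg]
    abel
  rw [psiHat_eq_of_coe_angle hd hangle, hψ]
  push_cast
  rfl

theorem stmt1 {b K : ℕ} (hb : 1 ≤ b) (hK : 1 ≤ K)
    (g : Fin K → ℂ) (hg : ∀ k, g k ≠ 0)
    (ψ : Fin K → ℂ) (hmem : ∀ k, ψ k ∈ Fb b)
    (hne : (∑ k, ψ k * g k) ≠ 0)
    (hang : ∀ S₁ S₂ : Finset (Fin K),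
      Disjoint S₁ S₂ → S₁ ∪ S₂ = Finset.univ →
      (∑ k ∈ S₁, ψ k * g k) ≠ 0 → (∑ k ∈ S₂, ψ k * g k) ≠ 0 →
      intAngle (∑ k ∈ S₁, ψ k * g k) (∑ k ∈ S₂, ψ k * g k) ≤ π / 2 ^ b) :
    ∀ k, ψ k = psiHat b (g k) (Complex.arg (∑ k, ψ k * g k)) :=
  stmt1_general hb g hg ψ hmem hne hang
end

section
/- Let b ≥ 1, K ≥ 1, L ≥ 1 be integers and let g_1, …, g_L ∈ ℂ^K have all entries g_{ℓ,k} nonzero. For ω ∈ [0, 2π) define the vector ψ_ℓ(ω) ∈ F_b^K componentwise by (ψ_ℓ(ω))_k = ψ̂_{g_{ℓ,k}}(ω). Suppose that for each ℓ ∈ {1, …, L}, ω*_ℓ ∈ [0, 2π) maximizes |ψ_ℓ(ω)ᵀ g_ℓ|² over ω ∈ [0, 2π). Then the configuration (ψ_1(ω*_1), …, ψ_L(ω*_L)) maximizes the passive beamforming gain F(ψ) = Σ_{ℓ=1}^L |ψ_ℓᵀ g_ℓ|² over all configurations ψ with ψ_ℓ ∈ F_b^K for every ℓ. -/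
open scoped Real

/-! Each term of `F` depends on one row only, so it suffices to beat a single row. Given a
discrete row `ψ` with `S = Σ ψ_k g_k`, rotate by `ω = arg S`: then
`|S| = Re (e^{-iω} S) = Σ_k |g_k| cos (phase_k + arg g_k − ω)`, and among the `2^b` available
phases the cosine is largest for the one nearest to `ω − arg g_k`, which is exactly the phase of
`ψ̂_{g_k}(ω)`. Hence `|S| ≤ |Σ_k ψ̂_{g_k}(ω) g_k|`, and by `2π`-periodicity of `ψ̂` we may take
`ω ∈ [0, 2π)`, where `ω*_ℓ` does at least as well. -/

lemma Real.cos_le_cos_of_abs_le {a b : ℝ} (hab : |a| ≤ |b|) (hb : |b| ≤ π) :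
    Real.cos b ≤ Real.cos a := by
  rw [← Real.cos_abs a, ← Real.cos_abs b]
  exact Real.cos_le_cos_of_nonneg_of_le_pi (abs_nonneg a) hb hab

lemma cos_le_cos_round {N : ℕ} (hN : N ≠ 0) (x : ℝ) (s : ℤ) :
    Real.cos (2 * π / N * (s - x)) ≤ Real.cos (2 * π / N * (round x - x)) := by
  have hN' : (N : ℝ) ≠ 0 := Nat.cast_ne_zero.mpr hN
  -- `s - n * N` is the residue of `s` modulo `N` nearest to `x`
  set n := round ((s - x) / N)
  have hshift : 2 * π / N * (s - x) = 2 * π * ((s - x) / N - n) + n * (2 * π) := by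
    field_simp
    ring
  have hreduced : |2 * π * ((s - x) / N - n)| ≤ π := by
    rw [abs_mul, abs_of_pos Real.two_pi_pos]
    nlinarith [abs_sub_round ((s - x) / N), Real.pi_pos]
  have hcloser : |2 * π / N * (round x - x)| ≤ |2 * π * ((s - x) / N - n)| := by
    have hm : 2 * π * ((s - x) / N - n) = 2 * π / N * (((s - n * N : ℤ) : ℝ) - x) := by
      push_cast
      field_simp
      ring
    rw [hm, abs_mul, abs_mul, abs_sub_comm _ x, abs_sub_comm _ x]
    exact mul_le_mul_of_nonneg_left (round_le x _) (abs_nonneg _)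
  rw [hshift, Real.cos_add_int_mul_two_pi]
  exact Real.cos_le_cos_of_abs_le hcloser hreduced

lemma re_exp_mul_I_mul_s2 (θ : ℝ) (g : ℂ) :
    (Complex.exp (θ * Complex.I) * g).re = ‖g‖ * Real.cos (θ + Complex.arg g) := by
  conv_lhs => rw [← Complex.norm_mul_exp_arg_mul_I g]
  rw [mul_left_comm, ← Complex.exp_add, ← add_mul, ← Complex.ofReal_add, Complex.re_ofReal_mul,
    Complex.exp_ofReal_mul_I_re]

lemma exists_eq_exp_of_mem_Fb {b : ℕ} {z : ℂ} (hz : z ∈ Fb b) :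
    ∃ s : ℤ, z = Complex.exp (↑(2 * π / (2 ^ b : ℕ) * s) * Complex.I) := by
  obtain ⟨s, -, rfl⟩ := hz
  exact ⟨s, by push_cast; ring_nf⟩

lemma psiHat_eq_exp (b : ℕ) (g : ℂ) (ω : ℝ) :
    psiHat b g ω = Complex.exp (↑(2 * π / (2 ^ b : ℕ) *
      round ((2 ^ b : ℕ) / (2 * π) * (ω - Complex.arg g))) * Complex.I) := by
  rw [psiHat]
  push_cast
  ring_nf

lemma re_mul_le_re_psiHat_mul {b : ℕ} {z : ℂ} (hz : z ∈ Fb b) (g : ℂ) (ω : ℝ) :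
    (Complex.exp (-ω * Complex.I) * (z * g)).re ≤
      (Complex.exp (-ω * Complex.I) * (psiHat b g ω * g)).re := by
  obtain ⟨s, rfl⟩ := exists_eq_exp_of_mem_Fb hz
  set x := ((2 ^ b : ℕ) : ℝ) / (2 * π) * (ω - Complex.arg g) with hx
  have hphase (t : ℝ) : Complex.exp (-ω * Complex.I) *
      (Complex.exp (↑(2 * π / (2 ^ b : ℕ) * t) * Complex.I) * g) =
      Complex.exp (↑(2 * π / (2 ^ b : ℕ) * (t - x) - Complex.arg g) * Complex.I) * g := by
    rw [← mul_assoc, ← Complex.exp_add, hx]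
    congr 2
    push_cast
    field_simp
    ring
  rw [psiHat_eq_exp, hphase, hphase, re_exp_mul_I_mul_s2, re_exp_mul_I_mul_s2, sub_add_cancel,
    sub_add_cancel]
  exact mul_le_mul_of_nonneg_left (cos_le_cos_round (by positivity) x s) (norm_nonneg g)

lemma psiHat_periodic (b : ℕ) (g : ℂ) : Function.Periodic (psiHat b g) (2 * π) := by
  intro ω
  have hshift : ((2 ^ b : ℕ) : ℝ) / (2 * π) * (ω + 2 * π - Complex.arg g) =
      ((2 ^ b : ℕ) : ℝ) / (2 * π) * (ω - Complex.arg g) + (2 ^ b : ℕ) := by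
    field_simp
    ring
  have hturn (r : ℤ) : (↑(2 * π / (2 ^ b : ℕ) * ↑(r + (2 ^ b : ℕ))) * Complex.I : ℂ) =
      ↑(2 * π / (2 ^ b : ℕ) * r) * Complex.I + 2 * π * Complex.I := by
    push_cast
    field_simp
  rw [psiHat_eq_exp, psiHat_eq_exp, hshift, round_add_natCast, hturn, Complex.exp_add,
    Complex.exp_two_pi_mul_I, mul_one]

lemma norm_sum_le_norm_sum_psiHat_arg {ι : Type*} [Fintype ι] {b : ℕ} {ψ : ι → ℂ}
    (hψ : ∀ k, ψ k ∈ Fb b) (f : ι → ℂ) :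
    ‖∑ k, ψ k * f k‖ ≤ ‖∑ k, psiHat b (f k) (Complex.arg (∑ k, ψ k * f k)) * f k‖ := by
  set ω := Complex.arg (∑ k, ψ k * f k)
  calc ‖∑ k, ψ k * f k‖ = (Complex.exp (-ω * Complex.I) * ∑ k, ψ k * f k).re := by
        rw [← Complex.ofReal_neg, re_exp_mul_I_mul_s2, neg_add_cancel, Real.cos_zero, mul_one]
    _ = ∑ k, (Complex.exp (-ω * Complex.I) * (ψ k * f k)).re := by
        rw [Finset.mul_sum, Complex.re_sum]
    _ ≤ ∑ k, (Complex.exp (-ω * Complex.I) * (psiHat b (f k) ω * f k)).re :=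
        Finset.sum_le_sum fun k _ => re_mul_le_re_psiHat_mul (hψ k) (f k) ω
    _ = (Complex.exp (-ω * Complex.I) * ∑ k, psiHat b (f k) ω * f k).re := by
        rw [Finset.mul_sum, Complex.re_sum]
    _ ≤ ‖Complex.exp (-ω * Complex.I) * ∑ k, psiHat b (f k) ω * f k‖ := Complex.re_le_norm _
    _ = ‖∑ k, psiHat b (f k) ω * f k‖ := by
        rw [norm_mul, ← Complex.ofReal_neg, Complex.norm_exp_ofReal_mul_I, one_mul]

lemma exists_mem_Ico_norm_sum_le_norm_sum_psiHat {ι : Type*} [Fintype ι] {b : ℕ} {ψ : ι → ℂ}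
    (hψ : ∀ k, ψ k ∈ Fb b) (f : ι → ℂ) :
    ∃ ω ∈ Set.Ico 0 (2 * π), ‖∑ k, ψ k * f k‖ ≤ ‖∑ k, psiHat b (f k) ω * f k‖ := by
  have hperiodic : Function.Periodic (fun ω => ∑ k, psiHat b (f k) ω * f k) (2 * π) :=
    fun ω => by simp only [psiHat_periodic b _ ω]
  obtain ⟨ω, hω, heq⟩ := hperiodic.exists_mem_Ico₀ Real.two_pi_pos (Complex.arg (∑ k, ψ k * f k))
  exact ⟨ω, hω, heq ▸ norm_sum_le_norm_sum_psiHat_arg hψ f⟩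

theorem stmt2_general {b K L : ℕ} (g : Fin L → Fin K → ℂ) (ωstar : Fin L → ℝ)
    (hωmax : ∀ ℓ, ∀ ω ∈ Set.Ico (0 : ℝ) (2 * π),
      ‖∑ k, psiHat b (g ℓ k) ω * g ℓ k‖ ^ 2 ≤
        ‖∑ k, psiHat b (g ℓ k) (ωstar ℓ) * g ℓ k‖ ^ 2) :
    ∀ ψ : Fin L → Fin K → ℂ, (∀ ℓ k, ψ ℓ k ∈ Fb b) →
      gain g ψ ≤ gain g (fun ℓ k => psiHat b (g ℓ k) (ωstar ℓ)) := by
  intro ψ hψ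
  refine Finset.sum_le_sum fun ℓ _ => ?_
  obtain ⟨ω, hω, hle⟩ := exists_mem_Ico_norm_sum_le_norm_sum_psiHat (hψ ℓ) (g ℓ)
  exact (pow_le_pow_left₀ (norm_nonneg _) hle 2).trans (hωmax ℓ ω hω)

theorem stmt2 {b K L : ℕ} (hb : 1 ≤ b) (hK : 1 ≤ K) (hL : 1 ≤ L)
    (g : Fin L → Fin K → ℂ) (hg : ∀ ℓ k, g ℓ k ≠ 0)
    (ωstar : Fin L → ℝ) (hωmem : ∀ ℓ, ωstar ℓ ∈ Set.Ico (0 : ℝ) (2 * π))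
    (hωmax : ∀ ℓ, ∀ ω ∈ Set.Ico (0 : ℝ) (2 * π),
      ‖∑ k, psiHat b (g ℓ k) ω * g ℓ k‖ ^ 2 ≤
        ‖∑ k, psiHat b (g ℓ k) (ωstar ℓ) * g ℓ k‖ ^ 2) :
    ∀ ψ : Fin L → Fin K → ℂ, (∀ ℓ k, ψ ℓ k ∈ Fb b) →
      gain g ψ ≤ gain g (fun ℓ k => psiHat b (g ℓ k) (ωstar ℓ)) :=
  stmt2_general g ωstar hωmax
end

section
/- Let L ≥ 1 and let a_1, …, a_L and b_1, …, b_L be real numbers such that 0 < m_a ≤ a_ℓ ≤ M_a and 0 < m_b ≤ b_ℓ ≤ M_b for all ℓ. Set m = (m_a·m_b)/(M_a·M_b). Then (Σ_{ℓ=1}^L a_ℓ·b_ℓ)² ≥ 4·(m^{1/2} + m^{−1/2})^{−2} · (Σ_{ℓ=1}^L a_ℓ²) · (Σ_{ℓ=1}^L b_ℓ²) (the reversed Cauchy–Schwarz inequality of Pólya–Szegő type). -/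
/-! Bound the ratios: `m b ≤ a ≤ M b` with `m = ma / Mb`, `M = Ma / mb`. Summing the termwise
inequality `(a - m b)(a - M b) ≤ 0` gives `∑ a² + m M ∑ b² ≤ (m + M) ∑ a b`, and AM-GM on the
left-hand side gives `4 m M ∑ a² ∑ b² ≤ (m + M)² (∑ a b)²`. Finally, for `s = √(m / M)` one has
`(s + s⁻¹)⁻² = m M / (m + M)²`. -/

open Finset

namespace Finset

variable {ι : Type*} (s : Finset ι) {a b : ι → ℝ} {m M : ℝ}

theorem sum_sq_add_mul_mul_sum_sq_le (hm : ∀ i ∈ s, m * b i ≤ a i) (hM : ∀ i ∈ s, a i ≤ M * b i) :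
    ∑ i ∈ s, a i ^ 2 + m * M * ∑ i ∈ s, b i ^ 2 ≤ (m + M) * ∑ i ∈ s, a i * b i := by
  have hterm : ∑ i ∈ s, (a i - m * b i) * (a i - M * b i) ≤ 0 :=
    sum_nonpos fun i hi =>
      mul_nonpos_of_nonneg_of_nonpos (by linarith [hm i hi]) (by linarith [hM i hi])
  have hexpand : ∑ i ∈ s, (a i - m * b i) * (a i - M * b i)
      = ∑ i ∈ s, a i ^ 2 - (m + M) * ∑ i ∈ s, a i * b i + m * M * ∑ i ∈ s, b i ^ 2 := by
    rw [mul_sum, mul_sum, ← sum_sub_distrib, ← sum_add_distrib]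
    exact sum_congr rfl fun i _ => by ring
  linarith

theorem four_mul_mul_sum_sq_mul_sum_sq_le (hm₀ : 0 ≤ m) (hM₀ : 0 ≤ M)
    (hm : ∀ i ∈ s, m * b i ≤ a i) (hM : ∀ i ∈ s, a i ≤ M * b i) :
    4 * (m * M) * (∑ i ∈ s, a i ^ 2) * (∑ i ∈ s, b i ^ 2)
      ≤ (m + M) ^ 2 * (∑ i ∈ s, a i * b i) ^ 2 := by
  set A := ∑ i ∈ s, a i ^ 2
  set B := ∑ i ∈ s, b i ^ 2
  have hA : 0 ≤ A := sum_nonneg fun i _ => sq_nonneg (a i)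
  have hB : 0 ≤ B := sum_nonneg fun i _ => sq_nonneg (b i)
  have hlin := sum_sq_add_mul_mul_sum_sq_le s hm hM
  calc 4 * (m * M) * A * B ≤ (A + m * M * B) ^ 2 := by nlinarith [sq_nonneg (A - m * M * B)]
    _ ≤ ((m + M) * ∑ i ∈ s, a i * b i) ^ 2 := by gcongr
    _ = _ := mul_pow _ _ _

end Finset

theorem inv_sq_sqrt_div_add_inv {m M : ℝ} (hm : 0 < m) (hM : 0 < M) :
    ((Real.sqrt (m / M) + (Real.sqrt (m / M))⁻¹) ^ 2)⁻¹ = m * M / (m + M) ^ 2 := by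
  have hs2 : Real.sqrt (m / M) ^ 2 = m / M := Real.sq_sqrt (div_pos hm hM).le
  rw [← inv_div]
  field_simp
  rw [hs2]
  field_simp

theorem stmt13 {L : ℕ} (hL : 1 ≤ L) (a b : Fin L → ℝ)
    (ma Ma mb Mb : ℝ) (hma : 0 < ma) (hmb : 0 < mb)
    (ha : ∀ ℓ, ma ≤ a ℓ ∧ a ℓ ≤ Ma) (hb : ∀ ℓ, mb ≤ b ℓ ∧ b ℓ ≤ Mb) :
    4 * ((Real.sqrt ((ma * mb) / (Ma * Mb)) +
          (Real.sqrt ((ma * mb) / (Ma * Mb)))⁻¹) ^ 2)⁻¹ *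
        (∑ ℓ, a ℓ ^ 2) * (∑ ℓ, b ℓ ^ 2) ≤ (∑ ℓ, a ℓ * b ℓ) ^ 2 := by
  have ℓ₀ : Fin L := ⟨0, hL⟩
  have hMa : 0 < Ma := hma.trans_le ((ha ℓ₀).1.trans (ha ℓ₀).2)
  have hMb : 0 < Mb := hmb.trans_le ((hb ℓ₀).1.trans (hb ℓ₀).2)
  have hlower : ∀ ℓ ∈ univ, ma / Mb * b ℓ ≤ a ℓ := fun ℓ _ => by
    rw [div_mul_eq_mul_div, div_le_iff₀ hMb]
    nlinarith [ha ℓ, hb ℓ]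
  have hupper : ∀ ℓ ∈ univ, a ℓ ≤ Ma / mb * b ℓ := fun ℓ _ => by
    rw [div_mul_eq_mul_div, le_div_iff₀ hmb]
    nlinarith [ha ℓ, hb ℓ]
  have hratio : ma * mb / (Ma * Mb) = ma / Mb / (Ma / mb) := by field_simp
  rw [hratio, inv_sq_sqrt_div_add_inv (by positivity) (by positivity), mul_div_assoc',
    div_mul_eq_mul_div, div_mul_eq_mul_div, div_le_iff₀ (by positivity), mul_comm _ (_ ^ 2)]
  exact four_mul_mul_sum_sq_mul_sum_sq_le univ (by positivity) (by positivity) hlower hupper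
end
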